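/- Let k ≥ 1 be an integer, let a ∈ ℂ not be a nonpositive integer, and let z, s ∈ ℂ satisfy either |z| < 1 (and s arbitrary) or |z| = 1 and Re(s) > k. Then the multiple Hurwitz–Lerch zeta function satisfies the decomposition Φ_k(z, s, a) = a^{−s} + Σ_{r=0}^{k−1} C(k, r) · z^{k−r} · Φ_{k−r}(z, s, a + (k − r)). -/

import Mathlib

open Complex

/-- The multiple Hurwitz–Lerch zeta function
`Φ_k(z,s,a) = ∑_{m₁,…,m_k ≥ 0} z^(m₁+⋯+m_k) / (m₁+⋯+m_k+a)^s`. -/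
noncomputable def mHurwitzLerch (k : ℕ) (z s a : ℂ) : ℂ :=
  ∑' m : Fin k → ℕ, z ^ (∑ j, m j) / (((∑ j, m j : ℕ) : ℂ) + a) ^ s

/-- The multiple Lipschitz–Lerch zeta function
`Li_k(z,s) = ∑_{m₁,…,m_k ≥ 1} z^(m₁+⋯+m_k) / (m₁+⋯+m_k)^s`. -/
noncomputable def mLipschitzLerch (k : ℕ) (z s : ℂ) : ℂ :=
  ∑' m : Fin k → ℕ+, z ^ (∑ j, (m j : ℕ)) / (((∑ j, (m j : ℕ) : ℕ) : ℂ)) ^ s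

/-- `[w]_q = (q^w - 1)/(q - 1)`, with `q^w = exp(w log q)`. -/
noncomputable def qBracket (q : ℝ) (w : ℂ) : ℂ := ((q : ℂ) ^ w - 1) / ((q : ℂ) - 1)

/-- Generalized binomial coefficient `C(s, l) = s(s-1)⋯(s-l+1)/l!`. -/
noncomputable def genBinom (s : ℂ) (l : ℕ) : ℂ :=
  (∏ i ∈ Finset.range l, (s - i)) / (l.factorial : ℂ)

/-!
Split the multiple sum according to the set `S` of indices with `mⱼ ≥ 1`. Writing `mⱼ = m'ⱼ + 1`
on `S`, the tuples that are positive exactly on `S` contribute `z^|S| Φ_|S|(z, s, a + |S|)`; there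
are `C(k, j)` sets of size `j`, and `S = ∅` contributes `a^(-s)`. Regrouping is justified by
absolute convergence: there are `C(n + k - 1, k - 1) = O(n^(k-1))` tuples with `∑ mⱼ = n`, and
`‖(n + a)^(-s)‖ = O(n^(-Re s))`.
-/

open Filter Asymptotics Finset

lemma isTheta_norm_natCast_add (a : ℂ) :
    (fun n : ℕ => ‖(n : ℂ) + a‖) =Θ[atTop] fun n => (n : ℝ) := by
  have ha : (fun _ : ℕ => a) =o[atTop] fun n : ℕ => (n : ℂ) :=
    isLittleO_const_left.2 <| Or.inr <| by
      simpa [Function.comp_def] using tendsto_natCast_atTop_atTop (R := ℝ)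
  simpa using (IsEquivalent.refl.add_isLittleO ha).isTheta.norm_left.norm_right

lemma isBigO_natCast_add_cpow (a s : ℂ) :
    (fun n : ℕ => ((n : ℂ) + a) ^ s) =O[atTop] fun n => (n : ℝ) ^ s.re :=
  (Complex.isBigO_cpow_rpow isBoundedUnder_const).trans
    ((isTheta_norm_natCast_add a).rpow (Eventually.of_forall fun _ => norm_nonneg _)
      (Eventually.of_forall fun _ => Nat.cast_nonneg _)).isBigO

lemma isBigO_natCast_add_one : (fun n : ℕ => (n : ℝ) + 1) =O[atTop] fun n => (n : ℝ) :=
  IsBigO.of_bound 2 <| by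
    filter_upwards [eventually_ge_atTop 1] with n hn
    have hn' : (1 : ℝ) ≤ n := by exact_mod_cast hn
    rw [Real.norm_of_nonneg (by positivity), Real.norm_of_nonneg (by positivity)]
    linarith

lemma summable_rpow_mul_geometric {r : ℝ} (hr0 : 0 ≤ r) (hr : r < 1) (p : ℝ) :
    Summable fun n : ℕ => (n : ℝ) ^ p * r ^ n := by
  refine summable_of_isBigO_nat
    (summable_pow_mul_geometric_of_norm_lt_one ⌈p⌉₊ (by rwa [Real.norm_of_nonneg hr0])) ?_
  refine IsBigO.of_bound 1 ?_
  filter_upwards [eventually_ge_atTop 1] with n hn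
  have hn' : (1 : ℝ) ≤ n := by exact_mod_cast hn
  rw [one_mul, Real.norm_of_nonneg (by positivity), Real.norm_of_nonneg (by positivity)]
  gcongr
  simpa using Real.rpow_le_rpow_of_exponent_le hn' (Nat.le_ceil p)

lemma summable_pow_mul_norm_div_cpow (p : ℕ) (a : ℂ) {z s : ℂ}
    (h : ‖z‖ < 1 ∨ ‖z‖ = 1 ∧ (p : ℝ) + 1 < s.re) :
    Summable fun n : ℕ => ((n : ℝ) + 1) ^ p * ‖z ^ n / ((n : ℂ) + a) ^ s‖ := by
  have hbound : (fun n : ℕ => ((n : ℝ) + 1) ^ p * ‖z ^ n / ((n : ℂ) + a) ^ s‖) =O[atTop]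
      fun n => (n : ℝ) ^ ((p : ℝ) - s.re) * ‖z‖ ^ n := by
    have h1 := (isBigO_natCast_add_one.pow p).mul (isBigO_natCast_add_cpow a (-s)).norm_left
    refine (h1.mul (isBigO_refl (fun n : ℕ => ‖z‖ ^ n) atTop)).congr' ?_ ?_
    · filter_upwards with n
      rw [div_eq_mul_inv, ← Complex.cpow_neg, norm_mul, norm_pow]
      ring
    · filter_upwards [eventually_gt_atTop 0] with n hn
      rw [Complex.neg_re, sub_eq_add_neg, Real.rpow_add (by exact_mod_cast hn), Real.rpow_natCast]
  rcases h with hz | ⟨hz, hs⟩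
  · exact summable_of_isBigO_nat (summable_rpow_mul_geometric (norm_nonneg z) hz _) hbound
  · refine summable_of_isBigO_nat ((Real.summable_nat_rpow (p := p - s.re)).2 (by linarith)) ?_
    simpa [hz] using hbound

namespace Finset.Nat

lemma card_antidiagonalTuple (k n : ℕ) :
    #(antidiagonalTuple k n) = (k + n - 1).choose n := by
  have hpi : antidiagonalTuple k n = piAntidiag univ n := by
    ext f
    simp [mem_antidiagonalTuple, mem_piAntidiag]
  rw [hpi, ← map_sym_eq_piAntidiag, card_map, sym_univ, card_univ, Sym.card_sym_eq_choose,
    Fintype.card_fin]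

lemma card_antidiagonalTuple_le (k n : ℕ) : #(antidiagonalTuple k n) ≤ (n + 1) ^ (k - 1) := by
  rw [card_antidiagonalTuple]
  rcases k with _ | k
  · rcases n with _ | n <;> simp
  · rw [show k + 1 + n - 1 = n + k by omega, Nat.choose_symm_add]
    exact Nat.choose_add_le_add_one_pow n k

end Finset.Nat

lemma summable_comp_sum_of_summable_pow_mul {k : ℕ} {f : ℕ → ℝ} (hf : 0 ≤ f)
    (h : Summable fun n : ℕ => ((n : ℝ) + 1) ^ (k - 1) * f n) :
    Summable fun m : Fin k → ℕ => f (∑ i, m i) := by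
  rw [← (Nat.sigmaAntidiagonalTupleEquivTuple k).summable_iff]
  refine (summable_sigma_of_nonneg fun _ => hf _).2
    ⟨fun _ => .of_finite, h.of_nonneg_of_le (fun _ => tsum_nonneg fun _ => hf _) fun n => ?_⟩
  have hfiber : ∀ m : Nat.antidiagonalTuple k n, ∑ i, (m : Fin k → ℕ) i = n :=
    fun m => Nat.mem_antidiagonalTuple.1 m.2
  simp only [Nat.sigmaAntidiagonalTupleEquivTuple, Equiv.coe_fn_mk, hfiber,
    tsum_fintype, sum_const, card_univ, Fintype.card_coe, nsmul_eq_mul]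
  exact mul_le_mul_of_nonneg_right (mod_cast Nat.card_antidiagonalTuple_le k n) (hf n)

section

variable {ι : Type*} [Fintype ι]

lemma tsum_pi_eq_mHurwitzLerch_card (z s a : ℂ) :
    ∑' m : ι → ℕ, z ^ (∑ i, m i) / (((∑ i, m i : ℕ) : ℂ) + a) ^ s =
      mHurwitzLerch (Fintype.card ι) z s a := by
  rw [mHurwitzLerch, ← ((Fintype.equivFin ι).arrowCongr (Equiv.refl ℕ)).tsum_eq]
  refine tsum_congr fun m => ?_
  simp only [Equiv.arrowCongr_apply, Equiv.coe_refl, Function.comp_apply, id,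
    Equiv.sum_comp]

variable [DecidableEq ι]

def posIndices (m : ι → ℕ) : Finset ι := {i | m i ≠ 0}

def succOnEquiv (S : Finset ι) : (S → ℕ) ≃ {m : ι → ℕ // posIndices m = S} where
  toFun m := ⟨fun i => if h : i ∈ S then m ⟨i, h⟩ + 1 else 0, by
    ext i
    by_cases h : i ∈ S <;> simp [posIndices, h]⟩
  invFun m i := m.1 i - 1
  left_inv m := funext fun i => by simp
  right_inv := fun ⟨m, hm⟩ => Subtype.ext <| funext fun i => by
    have hmS : i ∈ S ↔ m i ≠ 0 := by simp [← hm, posIndices]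
    by_cases h : i ∈ S
    · have := hmS.1 h
      simp only [h, dite_true]
      omega
    · simpa [h, eq_comm] using hmS.not.1 h

lemma sum_succOnEquiv (S : Finset ι) (m : S → ℕ) :
    ∑ i, (succOnEquiv S m : ι → ℕ) i = ∑ i, m i + #S := by
  simp only [succOnEquiv, Equiv.coe_fn_mk]
  rw [← sum_attach_eq_sum_dite S (fun i => m i + 1), ← univ_eq_attach, sum_add_distrib]
  simp

lemma tsum_posIndices_eq (z s a : ℂ) (S : Finset ι) :
    ∑' m : {m : ι → ℕ // posIndices m = S},
        z ^ (∑ i, (m : ι → ℕ) i) / (((∑ i, (m : ι → ℕ) i : ℕ) : ℂ) + a) ^ s =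
      z ^ #S * mHurwitzLerch #S z s (a + #S) := by
  rw [← (succOnEquiv S).tsum_eq, ← Fintype.card_coe, ← tsum_pi_eq_mHurwitzLerch_card,
    ← tsum_mul_left]
  refine tsum_congr fun m => ?_
  rw [sum_succOnEquiv, pow_add, Fintype.card_coe]
  push_cast
  rw [add_comm a, ← add_assoc]
  ring

lemma tsum_pi_eq_sum_finset {z s a : ℂ}
    (hs : Summable fun m : ι → ℕ => z ^ (∑ i, m i) / (((∑ i, m i : ℕ) : ℂ) + a) ^ s) :
    ∑' m : ι → ℕ, z ^ (∑ i, m i) / (((∑ i, m i : ℕ) : ℂ) + a) ^ s =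
      ∑ S : Finset ι, z ^ #S * mHurwitzLerch #S z s (a + #S) := by
  let e := Equiv.sigmaFiberEquiv (posIndices : (ι → ℕ) → Finset ι)
  rw [← e.tsum_eq]
  refine (e.summable_iff.2 hs).tsum_sigma.trans ?_
  rw [tsum_fintype]
  exact sum_congr rfl fun S _ => tsum_posIndices_eq z s a S

end

lemma mHurwitzLerch_zero (z s a : ℂ) : mHurwitzLerch 0 z s a = a ^ (-s) := by
  simp [mHurwitzLerch, cpow_neg]

lemma mHurwitzLerch_eq_sum_range {k : ℕ} {z s a : ℂ}
    (hs : Summable fun m : Fin k → ℕ => z ^ (∑ j, m j) / (((∑ j, m j : ℕ) : ℂ) + a) ^ s) :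
    mHurwitzLerch k z s a =
      ∑ j ∈ range (k + 1), (k.choose j : ℂ) * z ^ j * mHurwitzLerch j z s (a + j) := by
  rw [mHurwitzLerch, tsum_pi_eq_sum_finset hs, ← powerset_univ,
    sum_powerset_apply_card (fun j => z ^ j * mHurwitzLerch j z s (a + j)), card_univ,
    Fintype.card_fin]
  simp only [nsmul_eq_mul, mul_assoc]

lemma summable_mHurwitzLerch_terms {k : ℕ} (a : ℂ) {z s : ℂ}
    (h : ‖z‖ < 1 ∨ ‖z‖ = 1 ∧ (k : ℝ) < s.re) :
    Summable fun m : Fin k → ℕ => z ^ (∑ j, m j) / (((∑ j, m j : ℕ) : ℂ) + a) ^ s := by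
  rcases k.eq_zero_or_pos with rfl | hk
  · exact Summable.of_finite
  refine Summable.of_norm (summable_comp_sum_of_summable_pow_mul
    (f := fun n => ‖z ^ n / ((n : ℂ) + a) ^ s‖) (fun _ => norm_nonneg _) ?_)
  refine summable_pow_mul_norm_div_cpow (k - 1) a (h.imp_right fun h => ⟨h.1, ?_⟩)
  push_cast [Nat.cast_sub hk]
  linarith

theorem mHurwitzLerch_decomposition_general (k : ℕ) (a z s : ℂ)
    (h : ‖z‖ < 1 ∨ (‖z‖ = 1 ∧ (k : ℝ) < s.re)) :
    mHurwitzLerch k z s a =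
      a ^ (-s) +
        ∑ r ∈ Finset.range k, (k.choose r : ℂ) * z ^ (k - r) *
          mHurwitzLerch (k - r) z s (a + ((k - r : ℕ) : ℂ)) := by
  rw [mHurwitzLerch_eq_sum_range (summable_mHurwitzLerch_terms a h), ← sum_range_reflect,
    sum_range_succ, add_comm]
  simp only [Nat.add_sub_cancel, Nat.sub_self, Nat.choose_zero_right, Nat.cast_one, one_mul,
    pow_zero, Nat.cast_zero, add_zero, mHurwitzLerch_zero]
  congr 1
  refine sum_congr rfl fun r hr => ?_
  rw [Nat.choose_symm (mem_range.1 hr).le]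

/-- Decomposition of the multiple Hurwitz–Lerch zeta function into lower-order ones. -/
theorem mHurwitzLerch_decomposition (k : ℕ) (hk : 1 ≤ k) (a z s : ℂ)
    (ha : ∀ n : ℕ, a ≠ -(n : ℂ))
    (h : ‖z‖ < 1 ∨ (‖z‖ = 1 ∧ (k : ℝ) < s.re)) :
    mHurwitzLerch k z s a =
      a ^ (-s) +
        ∑ r ∈ Finset.range k, (k.choose r : ℂ) * z ^ (k - r) *
          mHurwitzLerch (k - r) z s (a + ((k - r : ℕ) : ℂ)) :=
  mHurwitzLerch_decomposition_general k a z s h
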